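/- arXiv:1311.1246 — 7 statements merged into one kernel-verified Lean document; each statement's English description precedes it below -/
import Mathlib

section
/- Let X be a metric space and let A, B ⊆ X be compact sets such that the closures of A \ B and of B \ A are disjoint. Then there exists r₀ > 0 such that for every r with 0 < r < r₀ the following two properties hold: (1) the open r-thickening of A ∩ B equals the intersection of the open r-thickenings of A and of B; (2) the closure of (A(r) \ B(r)) and the closure of (B(r) \ A(r)) are disjoint, where A(r), B(r) denote the open r-thickenings of A and B. -/
/-- If `A, B` are compact subsets of a metric space with
`closure (A \ B) ∩ closure (B \ A) = ∅`, then for all sufficiently small `r > 0` the open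
`r`-thickening of `A ∩ B` equals the intersection of the thickenings, and the closures of
`A(r) \ B(r)` and `B(r) \ A(r)` are disjoint. -/
theorem stmt1 {X : Type*} [MetricSpace X] (A B : Set X) (hA : IsCompact A) (hB : IsCompact B)
    (hsep : closure (A \ B) ∩ closure (B \ A) = ∅) :
    ∃ r₀ : ℝ, 0 < r₀ ∧ ∀ r : ℝ, 0 < r → r < r₀ →
      Metric.thickening r (A ∩ B) = Metric.thickening r A ∩ Metric.thickening r B ∧
      closure (Metric.thickening r A \ Metric.thickening r B) ∩
        closure (Metric.thickening r B \ Metric.thickening r A) = ∅ := by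
  set C := closure (A \ B) with hCdef
  set D := closure (B \ A) with hDdef
  have hCc : IsCompact C := hA.of_isClosed_subset isClosed_closure
    ((closure_mono Set.diff_subset).trans hA.isClosed.closure_eq.subset)
  obtain ⟨δ, hδ, hdis⟩ :=
    (Set.disjoint_iff_inter_eq_empty.2 hsep).exists_cthickenings hCc isClosed_closure
  refine ⟨δ / 2, by linarith, fun r hr hr' => ⟨?_, ?_⟩⟩
  · apply Set.Subset.antisymm
    · exact Set.subset_inter
        (Metric.thickening_subset_of_subset r Set.inter_subset_left)
        (Metric.thickening_subset_of_subset r Set.inter_subset_right)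
    · rintro x ⟨hxA, hxB⟩
      obtain ⟨a, ha, hda⟩ := Metric.mem_thickening_iff.1 hxA
      obtain ⟨b, hb, hdb⟩ := Metric.mem_thickening_iff.1 hxB
      by_cases haB : a ∈ B
      · exact Metric.mem_thickening_iff.2 ⟨a, ⟨ha, haB⟩, hda⟩
      by_cases hbA : b ∈ A
      · exact Metric.mem_thickening_iff.2 ⟨b, ⟨hbA, hb⟩, hdb⟩
      exfalso
      have haC : a ∈ C := subset_closure ⟨ha, haB⟩
      have hbD : b ∈ D := subset_closure ⟨hb, hbA⟩
      have hab : dist b a ≤ δ := by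
        have := dist_triangle b x a
        rw [dist_comm b x] at this
        linarith
      exact hdis.ne_of_mem (Metric.mem_cthickening_of_dist_le b a δ C haC hab)
        (Metric.self_subset_cthickening D hbD) rfl
  · have key : ∀ (S T : Set X), Metric.thickening r S \ Metric.thickening r T ⊆
        Metric.thickening r (closure (S \ T)) := by
      rintro S T x ⟨hxS, hxT⟩
      obtain ⟨a, ha, hda⟩ := Metric.mem_thickening_iff.1 hxS
      have haT : a ∉ T := fun h => hxT (Metric.mem_thickening_iff.2 ⟨a, h, hda⟩)
      exact Metric.mem_thickening_iff.2 ⟨a, subset_closure ⟨ha, haT⟩, hda⟩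
    have hsub : ∀ (S T : Set X), closure (Metric.thickening r S \ Metric.thickening r T) ⊆
        Metric.cthickening δ (closure (S \ T)) := fun S T =>
      (closure_mono (key S T)).trans <|
        (Metric.closure_thickening_subset_cthickening r _).trans <|
          Metric.cthickening_mono (by linarith) _
    exact Set.disjoint_iff_inter_eq_empty.1 <| hdis.mono (hsub A B) (hsub B A)
end

section
/- Let n be a positive integer, let r > 0 and ε ≥ 0, let D ⊆ ℂⁿ be an open set, and let K ⊆ ℂⁿ be a convex set such that for every x ∈ K the open ball of radius r centered at x is contained in D. If g : D → ℂⁿ is holomorphic on D and ‖g(z)‖ ≤ ε for every z ∈ D, then for all x, y ∈ K one has ‖g(x) − g(y)‖ ≤ (ε / r) · ‖x − y‖. -/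
/-- Cauchy-estimate Lipschitz bound: if `g` is holomorphic on an open set
`D ⊆ ℂⁿ`, bounded by `ε` there, and `K` is a convex set such that the ball of radius `r`
around each point of `K` lies in `D`, then `g` is `(ε/r)`-Lipschitz on `K`. -/
theorem stmt2 (n : ℕ) (hn : 0 < n) (r ε : ℝ) (hr : 0 < r) (hε : 0 ≤ ε)
    (D : Set (EuclideanSpace ℂ (Fin n))) (hD : IsOpen D)
    (K : Set (EuclideanSpace ℂ (Fin n))) (hK : Convex ℝ K)
    (hKD : ∀ x ∈ K, Metric.ball x r ⊆ D)
    (g : EuclideanSpace ℂ (Fin n) → EuclideanSpace ℂ (Fin n))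
    (hg : DifferentiableOn ℂ g D) (hgε : ∀ z ∈ D, ‖g z‖ ≤ ε) :
    ∀ x ∈ K, ∀ y ∈ K, ‖g x - g y‖ ≤ (ε / r) * ‖x - y‖ := by
  have hKsub : K ⊆ D := fun x hx => hKD x hx (Metric.mem_ball_self hr)
  have hdiff : ∀ x ∈ K, DifferentiableAt ℂ g x := fun x hx =>
    hg.differentiableAt (hD.mem_nhds (hKsub hx))
  have hbound : ∀ x ∈ K, ‖fderiv ℂ g x‖ ≤ ε / r := by
    intro x hx
    refine ContinuousLinearMap.opNorm_le_bound _ (div_nonneg hε hr.le) fun v => ?_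
    rcases eq_or_ne v 0 with rfl | hv
    · simp
    have hvpos : 0 < ‖v‖ := norm_pos_iff.mpr hv
    set f : ℂ → EuclideanSpace ℂ (Fin n) := fun t => g (x + t • v) with hf
    set R : ℝ := r / ‖v‖ with hRdef
    have hR : 0 < R := div_pos hr hvpos
    have hmaps : ∀ t : ℂ, ‖t‖ < R → x + t • v ∈ D := by
      intro t ht
      apply hKD x hx
      rw [Metric.mem_ball, dist_eq_norm]
      have : ‖x + t • v - x‖ = ‖t‖ * ‖v‖ := by
        rw [add_sub_cancel_left, norm_smul]
      rw [this]
      calc ‖t‖ * ‖v‖ < R * ‖v‖ := by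
            exact mul_lt_mul_of_pos_right ht hvpos
        _ = r := div_mul_cancel₀ r hvpos.ne'
    have hfd : DifferentiableOn ℂ f (Metric.ball (0 : ℂ) R) := by
      intro t ht
      rw [Metric.mem_ball, dist_zero_right] at ht
      have hgd : DifferentiableAt ℂ g (x + t • v) :=
        hg.differentiableAt (hD.mem_nhds (hmaps t ht))
      have hl : DifferentiableAt ℂ (fun s : ℂ => x + s • v) t :=
        (differentiableAt_id.smul_const v).const_add x
      exact (hgd.comp t hl).differentiableWithinAt
    -- deriv f 0 = fderiv ℂ g x v
    have hline : HasDerivAt (fun t : ℂ => x + t • v) v 0 := by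
      have := ((hasDerivAt_id (0 : ℂ)).smul_const v).const_add x
      simpa using this
    have hf0 : HasDerivAt f (fderiv ℂ g x v) 0 := by
      have hgx : HasFDerivAt g (fderiv ℂ g x) (x + (0 : ℂ) • v) := by
        simpa using (hdiff x hx).hasFDerivAt
      exact hgx.comp_hasDerivAt 0 hline
    have key : ∀ ρ ∈ Set.Ioo 0 R, ‖deriv f 0‖ ≤ ε / ρ := by
      intro ρ hρ
      refine Complex.norm_deriv_le_of_forall_mem_sphere_norm_le hρ.1 ?_ ?_
      · refine DifferentiableOn.diffContOnCl ?_
        refine hfd.mono ?_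
        rw [closure_ball (0 : ℂ) hρ.1.ne']
        exact Metric.closedBall_subset_ball hρ.2
      · intro z hz
        rw [Metric.mem_sphere, dist_zero_right] at hz
        exact hgε _ (hmaps z (by rw [hz]; exact hρ.2))
    have hd : ‖deriv f 0‖ ≤ ε / R := by
      have htend : Filter.Tendsto (fun ρ : ℝ => ε / ρ) (nhdsWithin R (Set.Iio R))
          (nhds (ε / R)) :=
        (Filter.Tendsto.div tendsto_const_nhds Filter.tendsto_id hR.ne').mono_left
          nhdsWithin_le_nhds
      refine ge_of_tendsto htend ?_
      filter_upwards [Ioo_mem_nhdsLT_of_mem ⟨half_lt_self hR, le_refl R⟩] with ρ hρ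
      exact key ρ ⟨lt_trans (half_pos hR) hρ.1, hρ.2⟩
    have hdr : deriv f 0 = fderiv ℂ g x v := hf0.deriv
    rw [hdr] at hd
    calc ‖fderiv ℂ g x v‖ ≤ ε / R := hd
      _ = ε / r * ‖v‖ := by rw [hRdef]; field_simp
  intro x hx y hy
  have := hK.norm_image_sub_le_of_norm_fderiv_le hdiff hbound hy hx
  simpa using this
end

section
/- Let n be a positive integer, let r > 0 and 0 ≤ ε < r, let D ⊆ ℂⁿ be an open set, and let K ⊆ ℂⁿ be a convex set such that for every x ∈ K the open ball of radius r centered at x is contained in D. If g : D → ℂⁿ is holomorphic on D and ‖g(z)‖ ≤ ε for every z ∈ D, then the map z ↦ z + g(z) is injective on K. -/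
/-- If `g` is holomorphic on an open set `D ⊆ ℂⁿ`, bounded by `ε < r`
there, and `K` is a convex set such that the ball of radius `r` around each point of `K`
lies in `D`, then `z ↦ z + g z` is injective on `K`. -/
theorem stmt3 (n : ℕ) (hn : 0 < n) (r ε : ℝ) (hr : 0 < r) (hε : 0 ≤ ε) (hεr : ε < r)
    (D : Set (EuclideanSpace ℂ (Fin n))) (hD : IsOpen D)
    (K : Set (EuclideanSpace ℂ (Fin n))) (hK : Convex ℝ K)
    (hKD : ∀ x ∈ K, Metric.ball x r ⊆ D)
    (g : EuclideanSpace ℂ (Fin n) → EuclideanSpace ℂ (Fin n))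
    (hg : DifferentiableOn ℂ g D) (hgε : ∀ z ∈ D, ‖g z‖ ≤ ε) :
    Set.InjOn (fun z => z + g z) K := by
  set r' : ℝ := (ε + r) / 2 with hr'def
  have hεr' : ε < r' := by simp [hr'def]; linarith
  have hr'r : r' < r := by simp [hr'def]; linarith
  have hr'pos : 0 < r' := lt_of_le_of_lt hε hεr'
  -- derivative bound at points of K
  have key : ∀ z ∈ K, ‖fderiv ℂ g z‖ ≤ ε / r' := by
    intro z hz
    have hzD : z ∈ D := hKD z hz (Metric.mem_ball_self hr)
    have hgz : DifferentiableAt ℂ g z := hg.differentiableAt (hD.mem_nhds hzD)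
    refine ContinuousLinearMap.opNorm_le_bound _ (div_nonneg hε hr'pos.le) ?_
    intro v
    rcases eq_or_ne v 0 with rfl | hv
    · simp
    have hvpos : (0:ℝ) < ‖v‖ := norm_pos_iff.mpr hv
    set u : EuclideanSpace ℂ (Fin n) := (‖v‖⁻¹ : ℂ) • v with hu
    have hunorm : ‖u‖ = 1 := by
      simp [hu, norm_smul, abs_of_pos (inv_pos.mpr hvpos), inv_mul_cancel₀ hvpos.ne']
    set φ : ℂ → EuclideanSpace ℂ (Fin n) := fun ζ => g (z + ζ • u) with hφ
    -- the affine slice map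
    have hline : ∀ ζ : ℂ, ‖ζ‖ < r → z + ζ • u ∈ D := by
      intro ζ hζ
      apply hKD z hz
      simp only [Metric.mem_ball, dist_eq_norm, add_sub_cancel_left, norm_smul, hunorm, mul_one]
      exact hζ
    have hφdiff : DifferentiableOn ℂ φ (Metric.closedBall 0 r') := by
      intro ζ hζ
      have hζr : ‖ζ‖ < r := by
        have := Metric.mem_closedBall.mp hζ
        rw [dist_zero_right] at this
        linarith
      have h1 : DifferentiableAt ℂ g (z + ζ • u) :=
        hg.differentiableAt (hD.mem_nhds (hline ζ hζr))
      have h2 : DifferentiableAt ℂ (fun w : ℂ => z + w • u) ζ := by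
        apply DifferentiableAt.const_add
        exact (differentiableAt_id.smul_const u)
      exact (h1.comp ζ h2).differentiableWithinAt
    have hderiv : HasDerivAt φ ((fderiv ℂ g z) u) 0 := by
      have h2 : HasDerivAt (fun w : ℂ => z + w • u) u 0 := by
        simpa using ((hasDerivAt_id (0:ℂ)).smul_const u).const_add z
      have h1 : HasFDerivAt g (fderiv ℂ g z) (z + (0:ℂ) • u) := by
        simpa using hgz.hasFDerivAt
      exact h1.comp_hasDerivAt 0 h2
    have hbound : ‖deriv φ 0‖ ≤ ε / r' := by
      apply Complex.norm_deriv_le_of_forall_mem_sphere_norm_le hr'pos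
      · apply DifferentiableOn.diffContOnCl
        apply hφdiff.mono
        exact Metric.closure_ball_subset_closedBall
      · intro ζ hζ
        have hζr : ‖ζ‖ < r := by
          have := Metric.mem_sphere.mp hζ
          rw [dist_zero_right] at this
          rw [this]; exact hr'r
        exact hgε _ (hline ζ hζr)
    rw [hderiv.deriv] at hbound
    have heq : (fderiv ℂ g z) v = (‖v‖ : ℂ) • (fderiv ℂ g z) u := by
      rw [hu, map_smul, smul_smul]
      norm_cast
      rw [mul_inv_cancel₀ hvpos.ne']
      simp
    rw [heq, norm_smul, Complex.norm_real, Real.norm_eq_abs, abs_of_pos hvpos]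
    calc ‖v‖ * ‖(fderiv ℂ g z) u‖ ≤ ‖v‖ * (ε / r') := by
          exact mul_le_mul_of_nonneg_left hbound hvpos.le
      _ = ε / r' * ‖v‖ := mul_comm _ _
  -- mean value inequality on K
  have mv : ∀ x ∈ K, ∀ y ∈ K, ‖g y - g x‖ ≤ ε / r' * ‖y - x‖ := by
    intro x hx y hy
    apply hK.norm_image_sub_le_of_norm_hasFDerivWithin_le
      (f' := fun z => (fderiv ℂ g z).restrictScalars ℝ) _ _ hx hy
    · intro z hz
      have hzD : z ∈ D := hKD z hz (Metric.mem_ball_self hr)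
      have := (hg.differentiableAt (hD.mem_nhds hzD)).hasFDerivAt
      exact (this.restrictScalars ℝ).hasFDerivWithinAt
    · intro z hz
      rw [ContinuousLinearMap.norm_restrictScalars]
      exact key z hz
  intro x hx y hy hxy
  simp only at hxy
  by_contra hne
  have hx_y : x - y = g y - g x := by
    rw [sub_eq_sub_iff_add_eq_add]
    simpa [add_comm] using hxy
  have h1 : ‖x - y‖ ≤ ε / r' * ‖x - y‖ := by
    calc ‖x - y‖ = ‖g y - g x‖ := by rw [hx_y]
      _ ≤ ε / r' * ‖y - x‖ := mv x hx y hy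
      _ = ε / r' * ‖x - y‖ := by rw [norm_sub_rev]
  have hlt : ε / r' < 1 := (div_lt_one hr'pos).mpr hεr'
  have hpos : 0 < ‖x - y‖ := by
    rw [norm_pos_iff]
    exact sub_ne_zero_of_ne hne
  nlinarith
end

section
/- Let n be a positive integer and let U, U' be open subsets of ℂⁿ such that the closure of U is compact and contained in U'. Then there exists ε > 0 with the following property: every map f : U' → ℂⁿ which is holomorphic on U' and satisfies ‖f(x) − x‖ < ε for all x ∈ U' is injective on U. -/
open Metric Set

/-- Cauchy/Schwarz-type estimate: if `g` is holomorphic on a ball `ball z r` and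
`‖g w - g z‖ < R` there, then `‖fderiv ℂ g z‖ ≤ R / r`. -/
lemma fderiv_bound_of_ball {n : ℕ} {g : EuclideanSpace ℂ (Fin n) → EuclideanSpace ℂ (Fin n)}
    {z : EuclideanSpace ℂ (Fin n)} {r R : ℝ} (hr : 0 < r)
    (hgd : DifferentiableOn ℂ g (ball z r))
    (hR : ∀ w ∈ ball z r, ‖g w - g z‖ < R) :
    ‖fderiv ℂ g z‖ ≤ R / r := by
  have hRnn : 0 ≤ R / r := by
    have := hR z (mem_ball_self hr)
    simp only [sub_self, norm_zero] at this
    positivity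
  refine (fderiv ℂ g z).opNorm_le_bound hRnn fun v => ?_
  rcases eq_or_ne v 0 with rfl | hv
  · simp
  · set u : EuclideanSpace ℂ (Fin n) := (‖v‖ : ℂ)⁻¹ • v with hu
    have hnu : ‖u‖ = 1 := by
      rw [hu, norm_smul]
      simp [norm_inv, hv, norm_ne_zero_iff.mpr hv]
    set A : ℂ → EuclideanSpace ℂ (Fin n) := fun t => z + t • u with hA
    have hAmaps : ∀ t ∈ ball (0 : ℂ) r, A t ∈ ball z r := by
      intro t ht
      simp only [hA, mem_ball, dist_eq_norm] at ht ⊢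
      rw [add_sub_cancel_left, norm_smul, hnu, mul_one]
      simpa using ht
    set h : ℂ → EuclideanSpace ℂ (Fin n) := g ∘ A with hh
    have hhd : DifferentiableOn ℂ h (ball (0 : ℂ) r) := by
      refine hgd.comp ?_ hAmaps
      exact (differentiable_id.smul_const u).const_add z |>.differentiableOn
    have hA0 : A 0 = z := by simp [hA]
    have hmaps : MapsTo h (ball (0 : ℂ) r) (ball (h 0) R) := by
      intro t ht
      simp only [hh, Function.comp, mem_ball, dist_eq_norm, hA0]
      exact hR _ (hAmaps t ht)
    have hderiv : HasDerivAt h ((fderiv ℂ g z) u) 0 := by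
      have hA' : HasDerivAt A u 0 := by
        have : HasDerivAt (fun t : ℂ => t • u) ((1 : ℂ) • u) 0 :=
          (hasDerivAt_id (0 : ℂ)).smul_const u
        simpa [hA, one_smul] using this.const_add z
      have hg' : HasFDerivAt g (fderiv ℂ g z) (A 0) := by
        rw [hA0]
        refine (hgd.differentiableAt ?_).hasFDerivAt
        exact (isOpen_ball).mem_nhds (mem_ball_self hr)
      exact hg'.comp_hasDerivAt 0 hA'
    have hbound : ‖deriv h 0‖ ≤ R / r :=
      Complex.norm_deriv_le_div_of_mapsTo_ball hhd (hmaps.mono_right ball_subset_closedBall) hr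
    rw [hderiv.deriv] at hbound
    have : (fderiv ℂ g z) v = (‖v‖ : ℂ) • (fderiv ℂ g z) u := by
      rw [hu, map_smul, smul_smul, mul_inv_cancel₀ (by exact_mod_cast norm_ne_zero_iff.mpr hv),
        one_smul]
    rw [this, norm_smul]
    simp only [Complex.norm_real, norm_norm]
    rw [mul_comm]
    exact mul_le_mul hbound le_rfl (norm_nonneg _) hRnn

/-- If `U ⋐ U'` are open subsets of `ℂⁿ` with `closure U` compact and
contained in `U'`, then there is `ε > 0` such that every holomorphic map `f : U' → ℂⁿ`
with `‖f x - x‖ < ε` on `U'` is injective on `U`. -/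
theorem stmt4 (n : ℕ) (hn : 0 < n) (U U' : Set (EuclideanSpace ℂ (Fin n)))
    (hU : IsOpen U) (hU' : IsOpen U') (hcpt : IsCompact (closure U))
    (hUU' : closure U ⊆ U') :
    ∃ ε : ℝ, 0 < ε ∧ ∀ f : EuclideanSpace ℂ (Fin n) → EuclideanSpace ℂ (Fin n),
      DifferentiableOn ℂ f U' → (∀ x ∈ U', ‖f x - x‖ < ε) → Set.InjOn f U := by
  obtain ⟨δ, hδ, hthick⟩ := hcpt.exists_thickening_subset_open hU' hUU'
  refine ⟨δ / 32, by positivity, fun f hf hclose x hx y hy hxy => ?_⟩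
  set g : EuclideanSpace ℂ (Fin n) → EuclideanSpace ℂ (Fin n) := fun w => f w - w with hg
  have hgd : DifferentiableOn ℂ g U' := hf.sub differentiableOn_id
  have hxcl : x ∈ closure U := subset_closure hx
  have hball : ∀ w ∈ ball x (3 * δ / 4), w ∈ U' := by
    intro w hw
    apply hthick
    rw [Metric.mem_thickening_iff]
    exact ⟨x, hxcl, by linarith [mem_ball.mp hw]⟩
  have hgsmall : ∀ w ∈ U', ‖g w‖ < δ / 32 := fun w hw => hclose w hw
  -- derivative bound on ball x (δ/2)
  have key : ∀ z ∈ ball x (δ / 2), ‖fderiv ℂ g z‖ ≤ 1 / 4 := by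
    intro z hz
    have hsub : ball z (δ / 4) ⊆ ball x (3 * δ / 4) := by
      apply ball_subset_ball'
      have := mem_ball.mp hz
      rw [dist_eq_norm] at this ⊢
      have h2 : ‖z - x‖ = ‖x - z‖ := norm_sub_rev _ _
      linarith [h2 ▸ this]
    have hzU' : ∀ w ∈ ball z (δ / 4), w ∈ U' := fun w hw => hball w (hsub hw)
    have hb : ‖fderiv ℂ g z‖ ≤ (δ / 16) / (δ / 4) :=
      fderiv_bound_of_ball (by positivity) (hgd.mono hzU')
        (fun w hw => by
          calc ‖g w - g z‖ ≤ ‖g w‖ + ‖g z‖ := norm_sub_le _ _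
            _ < δ / 32 + δ / 32 :=
                add_lt_add (hgsmall w (hzU' w hw)) (hgsmall z (hzU' z (mem_ball_self (by positivity))))
            _ = δ / 16 := by ring)
    calc ‖fderiv ℂ g z‖ ≤ (δ / 16) / (δ / 4) := hb
      _ = 1 / 4 := by field_simp; ring
  -- x and y are close
  have hxU' : x ∈ U' := hUU' hxcl
  have hyU' : y ∈ U' := hUU' (subset_closure hy)
  have hdiff : g y - g x = x - y := by
    simp only [hg]
    rw [hxy]
    abel
  have hclosexy : ‖x - y‖ < δ / 16 := by
    rw [← hdiff]
    calc ‖g y - g x‖ ≤ ‖g y‖ + ‖g x‖ := norm_sub_le _ _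
      _ < δ / 32 + δ / 32 := add_lt_add (hgsmall y hyU') (hgsmall x hxU')
      _ = δ / 16 := by ring
  have hymem : y ∈ ball x (δ / 2) := by
    rw [mem_ball, dist_comm, dist_eq_norm]
    linarith
  have hxmem : x ∈ ball x (δ / 2) := mem_ball_self (by positivity)
  have hmv : ‖g y - g x‖ ≤ 1 / 4 * ‖y - x‖ := by
    refine (convex_ball x (δ / 2)).norm_image_sub_le_of_norm_fderiv_le
      (fun z hz => hgd.differentiableAt (hU'.mem_nhds ?_)) key hxmem hymem
    apply hball
    exact ball_subset_ball (by linarith) hz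
  rw [hdiff, norm_sub_rev x y] at hmv
  have : ‖y - x‖ = 0 := by linarith [norm_nonneg (y - x)]
  exact (sub_eq_zero.mp (norm_eq_zero.mp this)).symm
end

section
/- Let (X, d) be a metric space, ι an index set, and for each j ∈ ι let V_j ⊆ U_j ⊆ X be subsets. Let S ⊆ X, let U ⊆ S be a set with U ⊆ ⋃_{j ∈ ι} V_j and U_j ⊆ S for every j, and let ε₀ > 0 satisfy d(x, y) > 2ε₀ whenever x ∈ V_j and y ∈ S \ U_j, for every j ∈ ι. If f : S → X is a map such that f is injective on each U_j and d(x, f(x)) < ε₀ for every x ∈ S, then f is injective on U. -/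
/-- Gluing of injectivity: if `f` is injective on each `U j`, is
`ε₀`-close to the identity on `S`, the sets `V j ⊆ U j ⊆ S` satisfy
`dist x y > 2ε₀` for `x ∈ V j`, `y ∈ S \ U j`, and `U₀ ⊆ S` is covered by the `V j`,
then `f` is injective on `U₀`. -/
theorem stmt5 {X : Type*} [MetricSpace X] {ι : Type*} (V U : ι → Set X)
    (hVU : ∀ j, V j ⊆ U j) (S U₀ : Set X) (hU₀S : U₀ ⊆ S)
    (hcover : U₀ ⊆ ⋃ j, V j) (hUS : ∀ j, U j ⊆ S) (ε₀ : ℝ) (hε₀ : 0 < ε₀)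
    (hsep : ∀ j, ∀ x ∈ V j, ∀ y ∈ S \ U j, dist x y > 2 * ε₀)
    (f : X → X) (hinj : ∀ j, Set.InjOn f (U j))
    (hclose : ∀ x ∈ S, dist x (f x) < ε₀) :
    Set.InjOn f U₀ := by
  intro x hx y hy hfxy
  obtain ⟨j, hxV⟩ := Set.mem_iUnion.mp (hcover hx)
  by_cases hyU : y ∈ U j
  · exact hinj j (hVU j hxV) hyU hfxy
  · exfalso
    have hsep' := hsep j x hxV y ⟨hU₀S hy, hyU⟩
    have h1 := hclose x (hU₀S hx)
    have h2 := hclose y (hU₀S hy)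
    have : dist x y ≤ dist x (f x) + dist (f y) y := by
      calc dist x y ≤ dist x (f x) + dist (f x) y := dist_triangle _ _ _
        _ = dist x (f x) + dist (f y) y := by rw [hfxy]
    rw [dist_comm (f y) y] at this
    linarith
end

section
/- Let M₄, M₅, t*, η be positive real numbers and let (δ_k)_{k≥0} be a sequence of real numbers with δ_k ≥ t* · 2^{−k−1} for every k ≥ 0. Then there exists ε* > 0 such that every sequence (ε_k)_{k≥0} of nonnegative real numbers satisfying ε₀ < ε* and ε_{k+1} ≤ M₅ · δ_k^{−1} · ε_k² for all k ≥ 0 fulfills: 4·M₄·ε_k < δ_k for every k ≥ 0, and M₄ · ∑_{k=0}^∞ ε_k < η. -/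
theorem aux_pow_quarter (n : ℕ) : ((1:ℝ) / 4) ^ n = (((1:ℝ) / 2) ^ n) ^ 2 := by
  rw [← pow_mul, Nat.mul_comm, pow_mul]
  norm_num

theorem aux_geom_bound (M₅ tstar : ℝ) (hM₅ : 0 < M₅) (htstar : 0 < tstar)
    (δ : ℕ → ℝ) (hδ : ∀ k, δ k ≥ tstar * (1 / 2) ^ (k + 1))
    (ε : ℕ → ℝ) (hεpos : ∀ k, 0 ≤ ε k)
    (hε0 : 8 * M₅ * ε 0 ≤ tstar)
    (hrec : ∀ k, ε (k + 1) ≤ M₅ * (δ k)⁻¹ * (ε k) ^ 2) :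
    ∀ k, ε k ≤ ε 0 * (1 / 4) ^ k := by
  intro k
  induction k with
  | zero => simp
  | succ k ih =>
    have hak : (0:ℝ) < (1 / 2 : ℝ) ^ k := by positivity
    have hak1 : (1 / 2 : ℝ) ^ k ≤ 1 := pow_le_one₀ (by norm_num) (by norm_num)
    have hδk : (0:ℝ) < tstar * (1 / 2) ^ (k + 1) := by positivity
    have h1 : (δ k)⁻¹ ≤ (tstar * (1 / 2) ^ (k + 1))⁻¹ :=
      inv_anti₀ hδk (hδ k)
    have hεnn := hεpos 0
    have h2 : ε (k + 1) ≤ M₅ * (tstar * (1 / 2) ^ (k + 1))⁻¹ * (ε 0 * (1 / 4) ^ k) ^ 2 := by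
      calc ε (k + 1) ≤ M₅ * (δ k)⁻¹ * ε k ^ 2 := hrec k
        _ ≤ M₅ * (tstar * (1 / 2) ^ (k + 1))⁻¹ * (ε 0 * (1 / 4) ^ k) ^ 2 := by
            gcongr
            exact hεpos k
    refine h2.trans ?_
    rw [aux_pow_quarter k, aux_pow_quarter (k + 1)]
    rw [pow_succ ((1:ℝ) / 2) k]
    rw [← sub_nonneg]
    have hkey : ε 0 * ((1 / 2 : ℝ) ^ k * (1 / 2)) ^ 2 -
        M₅ * (tstar * ((1 / 2 : ℝ) ^ k * (1 / 2)))⁻¹ * (ε 0 * ((1 / 2 : ℝ) ^ k) ^ 2) ^ 2 =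
        (ε 0 * ((1 / 2 : ℝ) ^ k) ^ 2 / (4 * tstar)) *
          (tstar - 8 * M₅ * ε 0 * (1 / 2 : ℝ) ^ k) := by
      field_simp
      ring
    rw [hkey]
    have h8 : (0:ℝ) ≤ 8 * M₅ * ε 0 := by positivity
    have h9 := mul_le_mul_of_nonneg_left hak1 h8
    have h5 : (0:ℝ) ≤ tstar - 8 * M₅ * ε 0 * (1 / 2 : ℝ) ^ k := by linarith
    positivity

/-- Given positive constants `M₄, M₅, t*, η` and a sequence `δ_k ≥ t* 2^{-k-1}`,
there is `ε* > 0` such that every nonnegative sequence with `ε₀ < ε*` and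
`ε_{k+1} ≤ M₅ δ_k⁻¹ ε_k²` satisfies `4 M₄ ε_k < δ_k` for all `k` and `M₄ ∑ ε_k < η`. -/
theorem stmt7 (M₄ M₅ tstar η : ℝ) (hM₄ : 0 < M₄) (hM₅ : 0 < M₅) (htstar : 0 < tstar)
    (hη : 0 < η) (δ : ℕ → ℝ) (hδ : ∀ k, δ k ≥ tstar * (1 / 2) ^ (k + 1)) :
    ∃ εstar : ℝ, 0 < εstar ∧ ∀ ε : ℕ → ℝ, (∀ k, 0 ≤ ε k) → ε 0 < εstar →
      (∀ k, ε (k + 1) ≤ M₅ * (δ k)⁻¹ * (ε k) ^ 2) →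
      (∀ k, 4 * M₄ * ε k < δ k) ∧ Summable ε ∧ M₄ * ∑' k, ε k < η := by
  refine ⟨min (min (tstar / (8 * M₅)) (tstar / (8 * M₄))) (3 * η / (4 * M₄)),
    by positivity, ?_⟩
  intro ε hεpos hε0 hrec
  have hε0a : ε 0 < tstar / (8 * M₅) :=
    lt_of_lt_of_le hε0 (le_trans (min_le_left _ _) (min_le_left _ _))
  have hε0b : ε 0 < tstar / (8 * M₄) :=
    lt_of_lt_of_le hε0 (le_trans (min_le_left _ _) (min_le_right _ _))
  have hε0c : ε 0 < 3 * η / (4 * M₄) := lt_of_lt_of_le hε0 (min_le_right _ _)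
  have hε0a' : 8 * M₅ * ε 0 ≤ tstar := by
    rw [lt_div_iff₀ (by positivity)] at hε0a
    nlinarith
  have hε0b' : 8 * M₄ * ε 0 < tstar := by
    rw [lt_div_iff₀ (by positivity)] at hε0b
    nlinarith
  have key := aux_geom_bound M₅ tstar hM₅ htstar δ hδ ε hεpos hε0a' hrec
  have hsum : Summable (fun k : ℕ => ε 0 * (1 / 4 : ℝ) ^ k) :=
    (summable_geometric_of_lt_one (by norm_num) (by norm_num)).mul_left _
  have hSummε : Summable ε := Summable.of_nonneg_of_le hεpos key hsum
  refine ⟨?_, hSummε, ?_⟩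
  · intro k
    have hak : (0:ℝ) < (1 / 2 : ℝ) ^ k := by positivity
    have h14 : ((1:ℝ) / 4) ^ k ≤ ((1:ℝ) / 2) ^ k :=
      pow_le_pow_left₀ (by norm_num) (by norm_num) k
    have h5 : ε k ≤ ε 0 * (1 / 2) ^ k :=
      (key k).trans (mul_le_mul_of_nonneg_left h14 (hεpos 0))
    calc 4 * M₄ * ε k ≤ 4 * M₄ * (ε 0 * (1 / 2) ^ k) := by gcongr
      _ < tstar * (1 / 2) ^ (k + 1) := by
          rw [pow_succ]
          nlinarith [mul_pos (show (0:ℝ) < tstar - 8 * M₄ * ε 0 by linarith) hak]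
      _ ≤ δ k := hδ k
  · have htsum : ∑' k, ε k ≤ ∑' k, ε 0 * (1 / 4 : ℝ) ^ k :=
      Summable.tsum_le_tsum key hSummε hsum
    have hgeom : ∑' k : ℕ, ε 0 * (1 / 4 : ℝ) ^ k = ε 0 * (4 / 3) := by
      rw [tsum_mul_left, tsum_geometric_of_lt_one (by norm_num) (by norm_num)]
      norm_num
    rw [hgeom] at htsum
    have h6 : M₄ * ∑' k, ε k ≤ M₄ * (ε 0 * (4 / 3)) := by gcongr
    refine lt_of_le_of_lt h6 ?_
    rw [lt_div_iff₀ (by positivity)] at hε0c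
    nlinarith
end

section
/- Let ε ∈ ℂ and let i denote the imaginary unit. The set of points z = (z₁, z₂, z₃) ∈ ℂ³ such that z ≠ 0, z₁² + z₂² + z₃² = 0, and the linear functional v ↦ (1 + 2z₁ − 2ε)v₁ + i·v₂ vanishes on the kernel of the linear functional v ↦ z₁v₁ + z₂v₂ + z₃v₃, equals the set {(ε, iε, 0), (ε − 1, −i(ε − 1), 0)} \ {(0,0,0)}. -/
/-- For `ε ∈ ℂ`, the set of points `z ≠ 0` of the null quadric
`z₁² + z₂² + z₃² = 0` at which `v ↦ (1 + 2z₁ - 2ε)v₁ + i v₂` vanishes on the kernel of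
`v ↦ z₁v₁ + z₂v₂ + z₃v₃` equals `{(ε, iε, 0), (ε-1, -i(ε-1), 0)} \ {0}`. -/
theorem stmt10 (ε : ℂ) :
    {z : Fin 3 → ℂ | z ≠ 0 ∧ z 0 ^ 2 + z 1 ^ 2 + z 2 ^ 2 = 0 ∧
      ∀ v : Fin 3 → ℂ, z 0 * v 0 + z 1 * v 1 + z 2 * v 2 = 0 →
        (1 + 2 * z 0 - 2 * ε) * v 0 + Complex.I * v 1 = 0}
      = ({![ε, Complex.I * ε, 0], ![ε - 1, -Complex.I * (ε - 1), 0]} : Set (Fin 3 → ℂ)) \ {0} := by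
  ext z
  simp only [Set.mem_setOf_eq, Set.mem_diff, Set.mem_insert_iff, Set.mem_singleton_iff]
  constructor
  · rintro ⟨hz, hq, hlin⟩
    have h2 : z 2 = 0 := by
      have h := hlin ![0, z 2, -(z 1)] (by simp; ring)
      simp [Complex.I_ne_zero] at h
      exact h
    have hA := hlin ![z 1, -(z 0), 0] (by simp; ring)
    simp at hA
    -- hA : (1 + 2 * z 0 - 2 * ε) * z 1 - Complex.I * z 0 = 0 (modulo simp form)
    have hq' : (z 1 - Complex.I * z 0) * (z 1 + Complex.I * z 0) = 0 := by
      rw [h2] at hq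
      linear_combination hq - z 0 ^ 2 * Complex.I_sq
    have h0ne : z 0 ≠ 0 := by
      intro h0
      rcases mul_eq_zero.1 hq' with h | h <;>
      · apply hz
        funext i
        fin_cases i <;> simp_all <;> linarith [h]
    refine ⟨?_, hz⟩
    rcases mul_eq_zero.1 hq' with h | h
    · -- z 1 = I * z 0 : point (ε, Iε, 0)
      have h1 : z 1 = Complex.I * z 0 := by linear_combination h
      left
      have h0 : z 0 = ε := by
        rw [h1] at hA
        have hI : Complex.I * (z 0 * (2 * z 0 - 2 * ε)) = 0 := by linear_combination hA
        rcases mul_eq_zero.1 hI with h' | h'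
        · exact absurd h' Complex.I_ne_zero
        rcases mul_eq_zero.1 h' with h'' | h''
        · exact absurd h'' h0ne
        · linear_combination h'' / 2
      funext i
      fin_cases i <;> simp [h0, h1, h2]
    · -- z 1 = -I * z 0 : point (ε-1, -I(ε-1), 0)
      have h1 : z 1 = -(Complex.I * z 0) := by linear_combination h
      right
      have h0 : z 0 = ε - 1 := by
        rw [h1] at hA
        have hI : Complex.I * (z 0 * (2 * z 0 - 2 * ε + 2)) = 0 := by linear_combination -hA
        rcases mul_eq_zero.1 hI with h' | h'
        · exact absurd h' Complex.I_ne_zero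
        rcases mul_eq_zero.1 h' with h'' | h''
        · exact absurd h'' h0ne
        · linear_combination h'' / 2
      funext i
      fin_cases i <;> simp [h0, h1, h2] <;> ring
  · rintro ⟨h | h, hz⟩ <;> subst h <;> refine ⟨hz, ?_, ?_⟩
    · simp
      linear_combination ε ^ 2 * Complex.I_sq
    · intro v hv
      simp at hv ⊢
      have hε : ε ≠ 0 := by
        intro h; apply hz; funext i; fin_cases i <;> simp [h]
      have : v 0 + Complex.I * v 1 = 0 := by
        have := mul_left_cancel₀ hε (b := v 0 + Complex.I * v 1) (c := 0) ?_
        · exact this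
        · linear_combination hv
      linear_combination this
    · simp
      linear_combination (ε-1) ^ 2 * Complex.I_sq
    · intro v hv
      simp at hv ⊢
      have hε : ε - 1 ≠ 0 := by
        intro h; apply hz; funext i; fin_cases i <;> simp [h] <;> simp [show ε = 1 by linear_combination h]
      have : v 0 - Complex.I * v 1 = 0 := by
        have := mul_left_cancel₀ hε (b := v 0 - Complex.I * v 1) (c := 0) ?_
        · exact this
        · linear_combination hv
      linear_combination -this
end
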